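/- ∑_{k=1}^∞ (3k − 1)·4^k / (k(2k−1)·C(4k,2k)) = π/2. -/

import Mathlib

/-!
Beta integrals give `∫₀¹ tᵃ (1 - t)ᵇ dt = a! b! / (a + b + 1)!`, and with them the `k`-th summand
equals `∫₀¹ 2 (1 - t²) (4 t² (1 - t)²)ᵏ dt`. Since `4 t² (1 - t)² ≤ 1/4` on `[0, 1]`, the geometric
series may be summed under the integral, leaving `∫₀¹ 2 (1 - t²) / (1 - 4 t² (1 - t)²) dt`, whose
integrand has the elementary antiderivative
`(log (1 + 2t - 2t²) - log (2t² - 2t + 1)) / 4 + arctan (2t - 1)`; its values at the endpoints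
are `± π / 4`.
-/

open MeasureTheory Nat
open scoped Interval

theorem integral_pow_mul_one_sub_pow (a b : ℕ) :
    ∫ t in (0:ℝ)..1, t ^ a * (1 - t) ^ b = (a ! * b ! : ℝ) / (a + b + 1)! := by
  have hβ := Complex.Gamma_mul_Gamma_eq_betaIntegral (s := a + 1) (t := b + 1)
    (by simp; positivity) (by simp; positivity)
  have hsum : (a + 1 + (b + 1) : ℂ) = (a + b + 1 : ℕ) + 1 := by push_cast; ring
  rw [hsum, Complex.Gamma_nat_eq_factorial, Complex.Gamma_nat_eq_factorial,
    Complex.Gamma_nat_eq_factorial, Complex.betaIntegral] at hβ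
  simp only [add_sub_cancel_right, Complex.cpow_natCast] at hβ
  norm_cast at hβ
  rw [intervalIntegral.integral_ofReal] at hβ
  rw [eq_div_iff (by positivity), mul_comm]
  exact_mod_cast hβ.symm

theorem hasSum_intervalIntegral_mul_pow {μ : Measure ℝ} {f q : ℝ → ℝ} {a b r : ℝ}
    (hf : IntervalIntegrable f μ a b) (hq : Continuous q) (hr₀ : 0 ≤ r) (hr : r < 1)
    (hqr : ∀ t ∈ Ι a b, |q t| ≤ r) :
    HasSum (fun k => ∫ t in a..b, f t * q t ^ k ∂μ) (∫ t in a..b, f t / (1 - q t) ∂μ) := by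
  refine intervalIntegral.hasSum_integral_of_dominated_convergence (fun k t => |f t| * r ^ k)
    (fun k => hf.def'.aestronglyMeasurable.mul (hq.aestronglyMeasurable.pow k))
    (fun k => ae_of_all _ fun t ht => ?_)
    (ae_of_all _ fun t _ => (summable_geometric_of_lt_one hr₀ hr).mul_left _)
    ?_ (ae_of_all _ fun t ht => ?_)
  · rw [norm_mul, norm_pow, Real.norm_eq_abs, Real.norm_eq_abs]
    gcongr
    exact hqr t ht
  · simp_rw [tsum_mul_left, tsum_geometric_of_lt_one hr₀ hr]
    exact hf.abs.mul_const _
  · rw [div_eq_mul_inv]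
    exact (hasSum_geometric_of_abs_lt_one ((hqr t ht).trans_lt hr)).mul_left _

theorem summand_eq_factorial (k : ℕ) :
    (3 * ((k : ℝ) + 1) - 1) * 4 ^ (k + 1) /
        (((k : ℝ) + 1) * (2 * ((k : ℝ) + 1) - 1) * (Nat.choose (4 * (k + 1)) (2 * (k + 1)) : ℝ))
      = 2 * 4 ^ k * ((2 * k)! * (2 * k)! / (2 * k + 2 * k + 1)!
          - (2 * k + 2)! * (2 * k)! / (2 * k + 2 + 2 * k + 1)!) := by
  rw [Nat.cast_choose ℝ (by omega), show 4 * (k + 1) - 2 * (k + 1) = 2 * k + 1 + 1 by omega,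
    show 4 * (k + 1) = 4 * k + 1 + 1 + 1 + 1 by ring, show 2 * (k + 1) = 2 * k + 1 + 1 by ring,
    show 2 * k + 2 + 2 * k + 1 = 4 * k + 1 + 1 + 1 by ring,
    show 2 * k + 2 * k + 1 = 4 * k + 1 by ring, show 2 * ((k : ℝ) + 1) - 1 = 2 * k + 1 by ring]
  simp only [Nat.factorial_succ]
  push_cast
  field_simp
  ring

theorem summand_eq_integral (k : ℕ) :
    (3 * ((k : ℝ) + 1) - 1) * 4 ^ (k + 1) /
        (((k : ℝ) + 1) * (2 * ((k : ℝ) + 1) - 1) * (Nat.choose (4 * (k + 1)) (2 * (k + 1)) : ℝ))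
      = ∫ t in (0:ℝ)..1, 2 * (1 - t ^ 2) * (4 * (t * (1 - t)) ^ 2) ^ k := by
  have hsplit : ∀ t : ℝ, 2 * (1 - t ^ 2) * (4 * (t * (1 - t)) ^ 2) ^ k
      = 2 * 4 ^ k * (t ^ (2 * k) * (1 - t) ^ (2 * k) - t ^ (2 * k + 2) * (1 - t) ^ (2 * k)) := by
    intro t
    rw [mul_pow, ← pow_mul, mul_pow, pow_mul, pow_mul]
    ring
  simp_rw [hsplit]
  rw [intervalIntegral.integral_const_mul,
    intervalIntegral.integral_sub ((by fun_prop : Continuous _).intervalIntegrable _ _)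
      ((by fun_prop : Continuous _).intervalIntegrable _ _),
    integral_pow_mul_one_sub_pow, integral_pow_mul_one_sub_pow, summand_eq_factorial]

theorem hasDerivAt_log_sub_log_add_arctan {t : ℝ} (ht : 0 < 1 + 2 * t - 2 * t ^ 2) :
    HasDerivAt (fun x => (Real.log (1 + 2 * x - 2 * x ^ 2) - Real.log (2 * x ^ 2 - 2 * x + 1)) / 4
        + Real.arctan (2 * x - 1))
      (2 * (1 - t ^ 2) / (1 - 4 * (t * (1 - t)) ^ 2)) t := by
  have hq : 0 < 2 * t ^ 2 - 2 * t + 1 := by nlinarith [sq_nonneg (2 * t - 1)]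
  have hx := hasDerivAt_id' (x := t)
  have hx2 := hasDerivAt_pow 2 t
  have hp : HasDerivAt (fun x : ℝ => 1 + 2 * x - 2 * x ^ 2) (2 - 4 * t) t :=
    ((hx.const_mul 2).const_add 1).fun_sub (hx2.const_mul 2) |>.congr_deriv (by norm_num; ring)
  have hq' : HasDerivAt (fun x : ℝ => 2 * x ^ 2 - 2 * x + 1) (4 * t - 2) t :=
    ((hx2.const_mul 2).fun_sub (hx.const_mul 2)).add_const 1 |>.congr_deriv (by norm_num; ring)
  have hl : HasDerivAt (fun x : ℝ => 2 * x - 1) 2 t :=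
    (hx.const_mul 2).sub_const 1 |>.congr_deriv (mul_one 2)
  refine (((hp.log ht.ne').fun_sub (hq'.log hq.ne')).div_const 4).fun_add hl.arctan
    |>.congr_deriv ?_
  -- partial fractions over `1 - 4 (t (1 - t))² = (1 + 2t - 2t²)(2t² - 2t + 1)`
  rw [show 1 - 4 * (t * (1 - t)) ^ 2 = (1 + 2 * t - 2 * t ^ 2) * (2 * t ^ 2 - 2 * t + 1) by ring,
    show 1 + (2 * t - 1) ^ 2 = 2 * (2 * t ^ 2 - 2 * t + 1) by ring]
  generalize hP : 1 + 2 * t - 2 * t ^ 2 = P at ht ⊢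
  generalize hQ : 2 * t ^ 2 - 2 * t + 1 = Q at hq ⊢
  field_simp
  linear_combination (4 * t - 6) * hP + (4 * t - 2) * hQ

theorem integral_eq_pi_div_two :
    ∫ t in (0:ℝ)..1, 2 * (1 - t ^ 2) / (1 - 4 * (t * (1 - t)) ^ 2) = Real.pi / 2 := by
  have hpos : ∀ t ∈ Set.uIcc (0:ℝ) 1, 0 < 1 + 2 * t - 2 * t ^ 2 := by
    intro t ht
    rw [Set.uIcc_of_le zero_le_one] at ht
    nlinarith [ht.1, ht.2]
  rw [intervalIntegral.integral_eq_sub_of_hasDerivAt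
    (fun t ht => hasDerivAt_log_sub_log_add_arctan (hpos t ht))]
  · norm_num [Real.arctan_one]
    ring
  · refine ContinuousOn.intervalIntegrable (ContinuousOn.div (by fun_prop) (by fun_prop) ?_)
    intro t ht
    have := hpos t ht
    nlinarith [sq_nonneg (2 * t - 1)]

theorem stmt_18 :
    ∑' k : ℕ, (3 * ((k : ℝ) + 1) - 1) * 4 ^ (k + 1) /
        (((k : ℝ) + 1) * (2 * ((k : ℝ) + 1) - 1) * (Nat.choose (4 * (k + 1)) (2 * (k + 1)) : ℝ)) =
      Real.pi / 2 := by
  have hq : ∀ t ∈ Ι (0:ℝ) 1, |4 * (t * (1 - t)) ^ 2| ≤ 1 / 4 := by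
    intro t ht
    rw [Set.uIoc_of_le zero_le_one] at ht
    obtain ⟨h0, h1⟩ := ht
    have : t * (1 - t) ≤ 1 / 4 := by nlinarith [sq_nonneg (2 * t - 1)]
    rw [abs_of_nonneg (by positivity)]
    nlinarith [mul_nonneg h0.le (sub_nonneg.2 h1)]
  have hsum := hasSum_intervalIntegral_mul_pow (μ := volume) (f := fun t => 2 * (1 - t ^ 2))
    ((by fun_prop : Continuous _).intervalIntegrable 0 1) (by fun_prop) (by norm_num) (by norm_num)
    hq
  simp_rw [summand_eq_integral, hsum.tsum_eq, integral_eq_pi_div_two]
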